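/- For integers n, m with m ≥ 1 and n − m ≥ 2 and every Y ∈ ℝ^{n×m}, the marginal of the singular value shrinkage prior is finite and strictly positive: 0 < ∫_{ℝ^{n×m}} (2π)^{−nm/2} exp(−½‖Y − M‖_F²) det(MᵀM)^{−(n−m−1)/2} dM < ∞, where the integrand is interpreted as 0 on the (Lebesgue-null) set where MᵀM is singular. -/

import Mathlib

open Matrix MeasureTheory ENNReal
open scoped Classical

/-- The matrix in `ℝ^{n×m}` corresponding to a point of `ℝ^{nm}`
(the identification via entries). -/
def toMat {n m : ℕ} (x : EuclideanSpace ℝ (Fin n × Fin m)) : Matrix (Fin n) (Fin m) ℝ :=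
  fun i a => x (i, a)

/-- `det(MᵀM)^{-(n-m-1)/2}` when `MᵀM` is invertible, interpreted as `0` on the
(Lebesgue-null) set where `MᵀM` is singular. -/
noncomputable def svsDensity (n m : ℕ) (x : EuclideanSpace ℝ (Fin n × Fin m)) : ℝ :=
  if IsUnit ((toMat x)ᵀ * toMat x).det then
    (((toMat x)ᵀ * toMat x).det) ^ (-(((n : ℝ) - m - 1)) / 2)
  else 0

/-!
Write `M` through its columns `x₁, …, xₘ` and put `β = n - m - 1`. Appending a column `v` to a
family spanning `V` multiplies the Gram determinant by `dist(v, V)²`, so `det(MᵀM)^{-β/2}` is the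
product of the factors `dist(xₖ, span(x₁, …, xₖ₋₁))^{-β}`. Integrating out one column at a time,
finiteness reduces to a bound on `∫ exp(-‖c - v‖²/2) dist(v, V)^{-β} dv` that is uniform in `c`
and in the subspace `V` of dimension `< m`. In an orthonormal basis of which `N = n - m` vectors
lie in `Vᗮ`, each of these `N` coordinates of `v` is at most `dist(v, V)`, hence
`dist(v, V)^{-β} ≤ ∏ |vᵢ|^{-β/N}`; as `β/N < 1`, the integral splits into one-dimensional integrals
that are all finite. Positivity holds because the integrand is positive on the nonempty open set of
matrices of full column rank.
-/

open Module Set Submodule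

namespace Matrix

variable {E : Type*} [NormedAddCommGroup E] [InnerProductSpace ℝ E]

theorem det_gram_nonneg {ι : Type*} [Fintype ι] [DecidableEq ι] (x : ι → E) :
    0 ≤ (gram ℝ x).det :=
  (posSemidef_gram ℝ x).det_nonneg

theorem continuous_det_gram {k : ℕ} : Continuous fun x : Fin k → E => (gram ℝ x).det :=
  Continuous.matrix_det <| continuous_matrix fun i j =>
    (continuous_apply i).inner (continuous_apply j)

theorem det_gram_cons [FiniteDimensional ℝ E] {k : ℕ} (f : Fin k → E) (v : E) :
    (gram ℝ (Fin.cons v f)).det =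
      ‖v - (span ℝ (range f)).starProjection v‖ ^ 2 * (gram ℝ f).det := by
  set K := span ℝ (range f)
  set u := K.starProjection v
  set w := v - u
  have hu : u ∈ K := K.starProjection_apply_mem v
  have hw : w ∈ Kᗮ := K.sub_starProjection_mem_orthogonal v
  have hwf : ∀ j, inner ℝ w (f j) = 0 := fun j =>
    inner_left_of_mem_orthogonal (subset_span (mem_range_self j)) hw
  have hwu : inner ℝ w u = 0 := inner_left_of_mem_orthogonal hu hw
  have hdep : (gram ℝ (Fin.cons u f : Fin (k + 1) → E)).det = 0 := by
    by_contra h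
    exact (linearIndependent_finCons.mp (linearIndependent_of_det_gram_ne_zero h)).2 hu
  have hv : v = u + w := (add_sub_cancel u v).symm
  -- Replacing `u` by `v = u + w` only adds `‖w‖²` to the `(0, 0)` entry.
  have hcol : gram ℝ (Fin.cons v f) = (gram ℝ (Fin.cons u f)).updateCol 0
      ((fun i => gram ℝ (Fin.cons u f) i 0) + Pi.single 0 (‖w‖ ^ 2)) := by
    ext i j
    refine Fin.cases ?_ (fun j => ?_) j <;> refine Fin.cases ?_ (fun i => ?_) i <;>
      simp [gram_apply, hv, inner_add_left, inner_add_right, hwf, real_inner_comm w, hwu,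
        norm_add_sq_real]
  have hminor : ((gram ℝ (Fin.cons u f)).updateCol 0 (Pi.single 0 (‖w‖ ^ 2))).submatrix
      Fin.succ Fin.succ = gram ℝ f := by
    ext i j
    simp [Fin.succ_ne_zero, gram_apply]
  rw [hcol, det_updateCol_add, updateCol_eq_self, hdep, zero_add, det_succ_column_zero,
    Fin.sum_univ_succ, Fin.succAbove_zero, hminor]
  simp [Fin.succ_ne_zero]

end Matrix

namespace MeasureTheory

variable {α : Type*} [MeasurableSpace α] (μ : Measure α) [SigmaFinite μ]

theorem lintegral_pi_fin_succ {k : ℕ} {f : (Fin (k + 1) → α) → ℝ≥0∞} (hf : Measurable f) :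
    ∫⁻ x, f x ∂Measure.pi (fun _ => μ) =
      ∫⁻ xs, ∫⁻ x₀, f (Fin.cons x₀ xs) ∂μ ∂Measure.pi (fun _ => μ) := by
  have e := (measurePreserving_piFinSuccAbove (fun _ : Fin (k + 1) => μ) 0).symm
  rw [← e.lintegral_comp hf]
  refine (lintegral_prod_symm _ (hf.comp e.measurable).aemeasurable).trans ?_
  simp [MeasurableEquiv.piFinSuccAbove_symm_apply, Fin.insertNthEquiv]

theorem lintegral_pi_fin_prod {k : ℕ} (f : Fin k → α → ℝ≥0∞) (hf : ∀ i, Measurable (f i)) :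
    ∫⁻ x, ∏ i, f i (x i) ∂Measure.pi (fun _ => μ) = ∏ i, ∫⁻ t, f i t ∂μ := by
  induction k with
  | zero => simp
  | succ k ih =>
    have hmeas : ∀ {l} (g : Fin l → α → ℝ≥0∞), (∀ i, Measurable (g i)) →
        Measurable fun x : Fin l → α => ∏ i, g i (x i) := fun g hg =>
      Finset.measurable_prod _ fun i _ => (hg i).comp (measurable_pi_apply i)
    rw [lintegral_pi_fin_succ μ (hmeas f hf)]
    simp_rw [Fin.prod_univ_succ, Fin.cons_zero, Fin.cons_succ, lintegral_mul_const _ (hf 0)]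
    rw [lintegral_const_mul _ (hmeas _ fun i => hf i.succ), ih _ fun i => hf i.succ]

theorem measurePreserving_curry (ι κ : Type*) [Fintype ι] [Fintype κ] :
    MeasurePreserving (MeasurableEquiv.curry ι κ α) (Measure.pi fun _ => μ)
      (Measure.pi fun _ => Measure.pi fun _ => μ) := by
  refine MeasurePreserving.symm _ ⟨(MeasurableEquiv.curry ι κ α).symm.measurable,
    (Measure.pi_eq fun s _ => ?_).symm⟩
  have hbox : (MeasurableEquiv.curry ι κ α).symm ⁻¹' univ.pi s =
      univ.pi fun i => univ.pi fun j => s (i, j) := by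
    ext x
    simp [MeasurableEquiv.coe_curry_symm]
  rw [MeasurableEquiv.map_apply, hbox, Measure.pi_pi]
  simp_rw [Measure.pi_pi]
  rw [Fintype.prod_prod_type]

end MeasureTheory

section OrthonormalBasis

variable {E : Type*} [NormedAddCommGroup E] [InnerProductSpace ℝ E] [FiniteDimensional ℝ E]

theorem exists_orthonormalBasis_apply_mem (W : Submodule ℝ E) :
    ∃ b : OrthonormalBasis (Fin (finrank ℝ E)) ℝ E,
      ∀ i : Fin (finrank ℝ E), (i : ℕ) < finrank ℝ W → b i ∈ W := by
  set bW := stdOrthonormalBasis ℝ W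
  set s : Set (Fin (finrank ℝ E)) := {i | (i : ℕ) < finrank ℝ W}
  let v : Fin (finrank ℝ E) → E := fun i =>
    if h : (i : ℕ) < finrank ℝ W then (bW ⟨i, h⟩ : E) else 0
  have hv : s.domRestrict v = W.subtypeₗᵢ ∘ bW ∘ fun i : s => ⟨i.1, i.2⟩ := by
    funext i
    exact dif_pos i.2
  have hon : Orthonormal ℝ (s.domRestrict v) := by
    rw [hv]
    exact Orthonormal.comp_linearIsometry
      (bW.orthonormal.comp _ fun i j h => Subtype.ext (Fin.ext (Fin.mk.inj h))) _
  obtain ⟨b, hb⟩ := hon.exists_orthonormalBasis_extension_of_card_eq (by simp)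
  exact ⟨b, fun i hi => by simp [hb i hi, v, hi]⟩

theorem OrthonormalBasis.lintegral_prod_repr [MeasurableSpace E] [BorelSpace E] {k : ℕ}
    (b : OrthonormalBasis (Fin k) ℝ E) (f : Fin k → ℝ → ℝ≥0∞) (hf : ∀ i, Measurable (f i)) :
    ∫⁻ v, ∏ i, f i (b.repr v i) = ∏ i, ∫⁻ t, f i t := by
  have hF : Measurable fun x : EuclideanSpace ℝ (Fin k) => ∏ i, f i (x i) :=
    Finset.measurable_prod _ fun i _ => (hf i).comp (by fun_prop)
  rw [b.measurePreserving_repr.lintegral_comp hF,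
    ← (PiLp.volume_preserving_toLp (Fin k)).lintegral_comp hF]
  exact lintegral_pi_fin_prod volume f hf

end OrthonormalBasis

namespace ShrinkagePrior

section Gaussian

variable {F : Type*}

noncomputable def gaussian [Norm F] (x : F) : ℝ≥0∞ :=
  ENNReal.ofReal (Real.exp (-‖x‖ ^ 2 / 2))

theorem gaussian_le_one [Norm F] (x : F) : gaussian x ≤ 1 :=
  ENNReal.ofReal_le_one.mpr (Real.exp_le_one_iff.mpr (by nlinarith [sq_nonneg ‖x‖]))

theorem gaussian_ne_zero [Norm F] (x : F) : gaussian x ≠ 0 :=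
  (ENNReal.ofReal_pos.mpr (Real.exp_pos _)).ne'

theorem continuous_gaussian_sub [SeminormedAddCommGroup F] (c : F) :
    Continuous fun v : F => gaussian (c - v) :=
  ENNReal.continuous_ofReal.comp (by fun_prop)

theorem gaussian_eq_prod {ι : Type*} [Fintype ι] (x : EuclideanSpace ℝ ι) :
    gaussian x = ∏ i, gaussian (x i) := by
  have hsum : -‖x‖ ^ 2 / 2 = ∑ i, -‖x i‖ ^ 2 / 2 := by
    rw [EuclideanSpace.norm_sq_eq, ← Finset.sum_div, Finset.sum_neg_distrib]
  rw [gaussian, hsum, Real.exp_sum, ENNReal.ofReal_prod_of_nonneg fun i _ => (Real.exp_pos _).le]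
  rfl

theorem gaussian_sub_eq_prod_repr [NormedAddCommGroup F] [InnerProductSpace ℝ F] {ι : Type*}
    [Fintype ι] (b : OrthonormalBasis ι ℝ F) (c v : F) :
    gaussian (c - v) = ∏ i, gaussian (b.repr c i - b.repr v i) := by
  rw [show gaussian (c - v) = gaussian (b.repr (c - v)) by simp only [gaussian, b.repr.norm_map],
    gaussian_eq_prod]
  simp

theorem lintegral_gaussian_lt_top : ∫⁻ t : ℝ, gaussian t < ⊤ := by
  have h : Integrable fun t : ℝ => Real.exp (-(1 / 2) * t ^ 2) :=
    integrable_exp_neg_mul_sq (by norm_num)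
  refine lt_of_eq_of_lt (lintegral_congr fun t => ?_) h.lintegral_lt_top
  rw [gaussian, Real.norm_eq_abs, sq_abs]
  ring_nf

end Gaussian

theorem setLIntegral_abs_rpow_neg_lt_top {q : ℝ} (hq : q < 1) :
    ∫⁻ t in Icc (-1 : ℝ) 1, ENNReal.ofReal |t| ^ (-q) < ⊤ := by
  have h01 : IntervalIntegrable (fun t : ℝ => |t| ^ (-q)) volume 0 1 :=
    (intervalIntegral.intervalIntegrable_rpow' (by linarith : -1 < -q)).congr fun t ht => by
      rw [uIoc_of_le zero_le_one] at ht
      simp [abs_of_pos ht.1]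
  have h10 : IntervalIntegrable (fun t : ℝ => |t| ^ (-q)) volume (-1) 0 := by
    rw [IntervalIntegrable.iff_comp_neg]
    simpa using h01.symm
  have h := h10.trans h01
  rw [intervalIntegrable_iff_integrableOn_Icc_of_le (by norm_num)] at h
  refine lt_of_eq_of_lt (setLIntegral_congr_fun_ae measurableSet_Icc ?_) h.lintegral_lt_top
  filter_upwards [Measure.ae_ne volume 0] with t ht _
  exact ENNReal.ofReal_rpow_of_pos (abs_pos.mpr ht)

theorem exists_lintegral_gaussian_mul_one_add_rpow_neg_le {q : ℝ} (hq0 : 0 < q) (hq1 : q < 1) :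
    ∃ K ≠ ⊤, ∀ c : ℝ, ∫⁻ t, gaussian (c - t) * (1 + ENNReal.ofReal |t| ^ (-q)) ≤ K := by
  set J := ∫⁻ t in Icc (-1 : ℝ) 1, ENNReal.ofReal |t| ^ (-q)
  set G := ∫⁻ t : ℝ, gaussian t
  refine ⟨G + (J + G), by finiteness [(setLIntegral_abs_rpow_neg_lt_top hq1).ne,
    lintegral_gaussian_lt_top.ne], fun c => ?_⟩
  have hpt : ∀ t, gaussian (c - t) * ENNReal.ofReal |t| ^ (-q) ≤
      (Icc (-1 : ℝ) 1).indicator (fun t => ENNReal.ofReal |t| ^ (-q)) t + gaussian (c - t) := by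
    intro t
    by_cases ht : t ∈ Icc (-1 : ℝ) 1
    · rw [indicator_of_mem ht]
      exact (mul_le_of_le_one_left' (gaussian_le_one _)).trans le_self_add
    · rw [indicator_of_notMem ht, zero_add]
      have h1 : 1 ≤ |t| := by
        rw [mem_Icc, not_and_or, not_le, not_le] at ht
        exact le_abs'.mpr (ht.imp le_of_lt le_of_lt)
      exact mul_le_of_le_one_right' (ENNReal.rpow_le_one_of_one_le_of_neg
        (ENNReal.one_le_ofReal.mpr h1) (neg_lt_zero.mpr hq0))
  have hmeas : Measurable fun t : ℝ => gaussian (c - t) := (continuous_gaussian_sub c).measurable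
  calc ∫⁻ t, gaussian (c - t) * (1 + ENNReal.ofReal |t| ^ (-q))
      = ∫⁻ t, (gaussian (c - t) + gaussian (c - t) * ENNReal.ofReal |t| ^ (-q)) := by
        simp_rw [mul_add, mul_one]
    _ ≤ ∫⁻ t, (gaussian (c - t) + ((Icc (-1 : ℝ) 1).indicator
          (fun t => ENNReal.ofReal |t| ^ (-q)) t + gaussian (c - t))) :=
        lintegral_mono fun t => add_le_add le_rfl (hpt t)
    _ = G + (J + G) := by
        rw [lintegral_add_left hmeas, lintegral_add_right _ hmeas,
          lintegral_indicator measurableSet_Icc, lintegral_sub_left_eq_self]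

variable {E : Type*} [NormedAddCommGroup E] [InnerProductSpace ℝ E] [FiniteDimensional ℝ E]

noncomputable def distWeight (β : ℝ) (V : Submodule ℝ E) (v : E) : ℝ≥0∞ :=
  if v ∈ V then 0 else ENNReal.ofReal (‖v - V.starProjection v‖ ^ (-β))

noncomputable def gramDensity (β : ℝ) {k : ℕ} (x : Fin k → E) : ℝ≥0∞ :=
  if 0 < (gram ℝ x).det then ENNReal.ofReal ((gram ℝ x).det ^ (-β / 2)) else 0

theorem gramDensity_cons (β : ℝ) {k : ℕ} (f : Fin k → E) (v : E) :
    gramDensity β (Fin.cons v f) = gramDensity β f * distWeight β (span ℝ (range f)) v := by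
  rw [gramDensity, gramDensity, det_gram_cons, distWeight]
  set V := span ℝ (range f)
  set r := ‖v - V.starProjection v‖
  by_cases hv : v ∈ V
  · have hr : r = 0 := by simp [r, starProjection_eq_self_iff.mpr hv]
    simp [hv, hr]
  have hr : 0 < r :=
    norm_pos_iff.mpr (sub_ne_zero.mpr fun h => hv (starProjection_eq_self_iff.mp h.symm))
  rcases (det_gram_nonneg f).lt_or_eq with hD | hD
  · rw [if_pos (mul_pos (pow_pos hr 2) hD), if_pos hD, if_neg hv,
      ← ENNReal.ofReal_mul (by positivity), Real.mul_rpow (by positivity) hD.le, mul_comm,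
      ← Real.rpow_two, ← Real.rpow_mul hr.le]
    ring_nf
  · simp [hv, ← hD]

theorem distWeight_le_prod {β q : ℝ} (hq : 0 < q) {V : Submodule ℝ E} {ι : Type*} [Fintype ι]
    (b : OrthonormalBasis ι ℝ E) (S : Finset ι) (hS : ∀ i ∈ S, b i ∈ Vᗮ) (hβ : β = q * S.card)
    (v : E) : distWeight β V v ≤ ∏ i, (1 + ENNReal.ofReal |b.repr v i| ^ (-q)) := by
  rw [distWeight]
  split_ifs with hv
  · exact zero_le
  set r := ‖v - V.starProjection v‖
  have hr : 0 < r :=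
    norm_pos_iff.mpr (sub_ne_zero.mpr fun h => hv (starProjection_eq_self_iff.mp h.symm))
  have hcoord : ∀ i ∈ S, |b.repr v i| ≤ r := fun i hi => by
    calc |b.repr v i| = |inner ℝ (b i) (v - V.starProjection v)| := by
          rw [b.repr_apply_apply, inner_sub_right,
            inner_left_of_mem_orthogonal (V.starProjection_apply_mem v) (hS i hi), sub_zero]
      _ ≤ ‖b i‖ * r := abs_real_inner_le_norm _ _
      _ = r := by rw [b.orthonormal.1 i, one_mul]
  calc ENNReal.ofReal (r ^ (-β)) = ∏ _i ∈ S, ENNReal.ofReal r ^ (-q) := by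
        rw [← ENNReal.ofReal_rpow_of_pos hr, Finset.prod_const, hβ, ← ENNReal.rpow_natCast,
          ← ENNReal.rpow_mul, neg_mul]
    _ ≤ ∏ i ∈ S, ENNReal.ofReal |b.repr v i| ^ (-q) := by
        refine Finset.prod_le_prod' fun i hi => ?_
        rw [ENNReal.rpow_neg, ENNReal.rpow_neg]
        exact ENNReal.inv_le_inv.mpr
          (ENNReal.rpow_le_rpow (ENNReal.ofReal_le_ofReal (hcoord i hi)) hq.le)
    _ ≤ ∏ i ∈ S, (1 + ENNReal.ofReal |b.repr v i| ^ (-q)) :=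
        Finset.prod_le_prod' fun i _ => le_add_self
    _ ≤ ∏ i, (1 + ENNReal.ofReal |b.repr v i| ^ (-q)) :=
        Finset.prod_le_prod_of_subset_of_one_le' (Finset.subset_univ S) fun i _ _ => le_self_add

variable [MeasurableSpace E] [BorelSpace E]

theorem measurable_gramDensity (β : ℝ) (k : ℕ) :
    Measurable (gramDensity β : (Fin k → E) → ℝ≥0∞) := by
  have h := (continuous_det_gram (E := E) (k := k)).measurable
  exact Measurable.ite (measurableSet_lt measurable_const h) (h.pow_const _).ennreal_ofReal
    measurable_const

theorem measurable_distWeight (β : ℝ) (V : Submodule ℝ E) : Measurable (distWeight β V) :=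
  Measurable.ite V.closed_of_finiteDimensional.measurableSet measurable_const
    ((continuous_id.sub V.starProjection.continuous).norm.measurable.pow_const _).ennreal_ofReal

theorem measurable_prod_mul_gramDensity (β : ℝ) {φ : E → E → ℝ≥0∞}
    (hφ : ∀ c, Measurable (φ c)) {k : ℕ} (y : Fin k → E) :
    Measurable fun x : Fin k → E => (∏ j, φ (y j) (x j)) * gramDensity β x :=
  (Finset.measurable_prod _ fun j _ => (hφ _).comp (measurable_pi_apply j)).mul
    (measurable_gramDensity β k)

theorem exists_lintegral_gaussian_mul_distWeight_le {β : ℝ} (hβ : 0 < β) {d : ℕ}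
    (hd : β + d < finrank ℝ E) :
    ∃ C ≠ ⊤, ∀ V : Submodule ℝ E, finrank ℝ V ≤ d → ∀ c : E,
      ∫⁻ v, gaussian (c - v) * distWeight β V v ≤ C := by
  set n := finrank ℝ E
  set N := n - d
  have hdn : d < n := by exact_mod_cast (by linarith : (d : ℝ) < n)
  have hN : (0 : ℝ) < N := by rw [Nat.cast_sub hdn.le]; linarith
  -- The singularity `dist(v, V)^{-β}` is shared out as `|vᵢ|^{-q}` over `N` coordinates
  -- orthogonal to `V`; `q < 1` makes each of them locally integrable.
  set q := β / N
  have hq0 : 0 < q := div_pos hβ hN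
  have hq1 : q < 1 := by rw [div_lt_one hN, Nat.cast_sub hdn.le]; linarith
  obtain ⟨K, hK, hKc⟩ := exists_lintegral_gaussian_mul_one_add_rpow_neg_le hq0 hq1
  refine ⟨K ^ n, pow_ne_top hK, fun V hV c => ?_⟩
  obtain ⟨b, hb⟩ := exists_orthonormalBasis_apply_mem Vᗮ
  set S : Finset (Fin n) := {i | (i : ℕ) < N}
  have hSV : ∀ i ∈ S, b i ∈ Vᗮ := fun i hi => hb i <| by
    have := V.finrank_add_finrank_orthogonal
    simp only [S, Finset.mem_filter, Finset.mem_univ, true_and] at hi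
    omega
  have hS : β = q * S.card := by
    rw [Fin.card_filter_val_lt, min_eq_right (Nat.sub_le _ _), div_mul_cancel₀ _ hN.ne']
  set h : Fin n → ℝ → ℝ≥0∞ := fun i t =>
    gaussian (b.repr c i - t) * (1 + ENNReal.ofReal |t| ^ (-q))
  have hh : ∀ i, Measurable (h i) := fun i =>
    (continuous_gaussian_sub _).measurable.mul (by fun_prop)
  calc ∫⁻ v, gaussian (c - v) * distWeight β V v
      ≤ ∫⁻ v, ∏ i, h i (b.repr v i) := lintegral_mono fun v => by
        rw [gaussian_sub_eq_prod_repr b, Finset.prod_mul_distrib]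
        gcongr
        exact distWeight_le_prod hq0 b S hSV hS v
    _ = ∏ i, ∫⁻ t, h i t := b.lintegral_prod_repr h hh
    _ ≤ ∏ _i : Fin n, K := Finset.prod_le_prod' fun i _ => hKc _
    _ = K ^ n := by simp

theorem lintegral_prod_mul_gramDensity_le (μ : Measure E) [SigmaFinite μ] (β : ℝ)
    {φ : E → E → ℝ≥0∞} (hφ : ∀ c, Measurable (φ c)) {k : ℕ} {C : ℝ≥0∞}
    (hC : ∀ V : Submodule ℝ E, finrank ℝ V < k → ∀ c, ∫⁻ v, φ c v * distWeight β V v ∂μ ≤ C)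
    (y : Fin k → E) :
    ∫⁻ x, (∏ j, φ (y j) (x j)) * gramDensity β x ∂Measure.pi (fun _ => μ) ≤ C ^ k := by
  induction k with
  | zero => simp [gramDensity]
  | succ k ih =>
    have hsplit : ∀ xs v, (∏ j, φ (y j) ((Fin.cons v xs : Fin (k + 1) → E) j)) *
        gramDensity β (Fin.cons v xs) = ((∏ j, φ (y j.succ) (xs j)) * gramDensity β xs) *
          (φ (y 0) v * distWeight β (span ℝ (range xs)) v) := by
      intro xs v
      rw [Fin.prod_univ_succ, gramDensity_cons]
      simp only [Fin.cons_zero, Fin.cons_succ]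
      ring
    calc ∫⁻ x, (∏ j, φ (y j) (x j)) * gramDensity β x ∂Measure.pi (fun _ => μ)
        = ∫⁻ xs, ((∏ j, φ (y j.succ) (xs j)) * gramDensity β xs) *
            ∫⁻ v, φ (y 0) v * distWeight β (span ℝ (range xs)) v ∂μ
            ∂Measure.pi (fun _ => μ) := by
          rw [lintegral_pi_fin_succ μ (measurable_prod_mul_gramDensity β hφ y)]
          simp_rw [hsplit]
          refine lintegral_congr fun xs => ?_
          exact lintegral_const_mul _ ((hφ _).mul (measurable_distWeight β _))
      _ ≤ ∫⁻ xs, ((∏ j, φ (y j.succ) (xs j)) * gramDensity β xs) * C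
            ∂Measure.pi (fun _ => μ) := by
          refine lintegral_mono fun xs => by
            gcongr
            exact hC _ ((finrank_range_le_card xs).trans_lt (by simp)) _
      _ = (∫⁻ xs, (∏ j, φ (y j.succ) (xs j)) * gramDensity β xs ∂Measure.pi (fun _ => μ)) * C :=
          lintegral_mul_const _ (measurable_prod_mul_gramDensity β hφ _)
      _ ≤ C ^ k * C := by gcongr; exact ih (fun V hV => hC V (by omega)) _
      _ = C ^ (k + 1) := (pow_succ C k).symm

theorem lintegral_prod_mul_gramDensity_pos (μ : Measure E) [SigmaFinite μ] [μ.IsOpenPosMeasure]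
    (β : ℝ) {φ : E → E → ℝ≥0∞} (hφ : ∀ c, Measurable (φ c)) (hφ0 : ∀ c v, φ c v ≠ 0) {k : ℕ}
    (hk : k ≤ finrank ℝ E) (y : Fin k → E) :
    0 < ∫⁻ x, (∏ j, φ (y j) (x j)) * gramDensity β x ∂Measure.pi (fun _ => μ) := by
  rw [lintegral_pos_iff_support (measurable_prod_mul_gramDensity β hφ y)]
  set U := {x : Fin k → E | 0 < (gram ℝ x).det}
  have hU : IsOpen U := isOpen_lt continuous_const continuous_det_gram
  have hUne : U.Nonempty := by
    have hon : Orthonormal ℝ fun j => stdOrthonormalBasis ℝ E (Fin.castLE hk j) :=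
      (stdOrthonormalBasis ℝ E).orthonormal.comp _ (Fin.castLE_injective hk)
    refine ⟨fun j => stdOrthonormalBasis ℝ E (Fin.castLE hk j), ?_⟩
    change 0 < (gram ℝ _).det
    rw [gram_eq_one_iff_orthonormal.mpr hon, det_one]
    exact one_pos
  refine (hU.measure_pos _ hUne).trans_le (measure_mono fun x hx => ?_)
  refine Function.mem_support.mpr (mul_ne_zero (Finset.prod_ne_zero_iff.mpr fun j _ => hφ0 _ _) ?_)
  rw [gramDensity, if_pos (show 0 < (gram ℝ x).det from hx)]
  exact (ENNReal.ofReal_pos.mpr (Real.rpow_pos_of_pos hx _)).ne'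

noncomputable def cols {n m : ℕ} :
    EuclideanSpace ℝ (Fin n × Fin m) ≃ᵐ (Fin m → EuclideanSpace ℝ (Fin n)) :=
  (MeasurableEquiv.toLp 2 _).symm.trans <|
    (MeasurableEquiv.arrowCongr' (Equiv.prodComm _ _) (MeasurableEquiv.refl ℝ)).trans <|
      (MeasurableEquiv.curry _ _ ℝ).trans <|
        MeasurableEquiv.piCongrRight fun _ => MeasurableEquiv.toLp 2 _

theorem cols_apply {n m : ℕ} (M : EuclideanSpace ℝ (Fin n × Fin m)) (a : Fin m) (i : Fin n) :
    cols M a i = M (i, a) := rfl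

theorem measurePreserving_cols {n m : ℕ} :
    MeasurePreserving (cols : EuclideanSpace ℝ (Fin n × Fin m) → _) volume
      (Measure.pi fun _ => volume) :=
  (PiLp.volume_preserving_ofLp _).trans <|
    (volume_preserving_arrowCongr' _ _ (MeasurePreserving.id _)).trans <|
      (measurePreserving_curry volume _ _).trans <|
        measurePreserving_pi _ _ fun _ => PiLp.volume_preserving_toLp _

theorem gram_cols {n m : ℕ} (M : EuclideanSpace ℝ (Fin n × Fin m)) :
    gram ℝ (cols M) = (toMat M)ᵀ * toMat M := by
  ext a b
  simp [gram_apply, mul_apply, toMat, PiLp.inner_apply, cols_apply, mul_comm]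

theorem ofReal_svsDensity {n m : ℕ} (M : EuclideanSpace ℝ (Fin n × Fin m)) :
    ENNReal.ofReal (svsDensity n m M) = gramDensity ((n : ℝ) - m - 1) (cols M) := by
  simp only [svsDensity, gramDensity, ← gram_cols, isUnit_iff_ne_zero]
  rcases (det_gram_nonneg (cols M)).lt_or_eq with hD | hD
  · rw [if_pos hD.ne', if_pos hD]
  · simp [← hD]

theorem gaussian_sub_eq_prod_cols {n m : ℕ} (Y M : EuclideanSpace ℝ (Fin n × Fin m)) :
    gaussian (Y - M) = ∏ a, gaussian (cols Y a - cols M a) := by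
  rw [gaussian_eq_prod, Fintype.prod_prod_type_right]
  simp_rw [gaussian_eq_prod]
  rfl

theorem lintegral_marginal_eq (n m : ℕ) (Y : EuclideanSpace ℝ (Fin n × Fin m)) {c : ℝ}
    (hc : 0 ≤ c) :
    ∫⁻ M, ENNReal.ofReal (c * Real.exp (-‖Y - M‖ ^ 2 / 2) * svsDensity n m M) =
      ENNReal.ofReal c * ∫⁻ x, (∏ a, gaussian (cols Y a - x a)) *
        gramDensity ((n : ℝ) - m - 1) x ∂Measure.pi fun _ => volume := by
  have hG := measurable_prod_mul_gramDensity ((n : ℝ) - m - 1)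
    (fun c => (continuous_gaussian_sub c).measurable) (cols Y)
  rw [← measurePreserving_cols.lintegral_comp hG, ← lintegral_const_mul' _ _ ofReal_ne_top]
  refine lintegral_congr fun M => ?_
  rw [ENNReal.ofReal_mul (by positivity), ENNReal.ofReal_mul hc, ofReal_svsDensity, mul_assoc,
    ← gaussian_sub_eq_prod_cols]
  rfl

end ShrinkagePrior

open ShrinkagePrior

theorem stmt10_general (n m : ℕ) (hnm : m + 2 ≤ n)
    (Y : EuclideanSpace ℝ (Fin n × Fin m)) :
    0 < ∫⁻ M, ENNReal.ofReal
        ((2 * Real.pi) ^ (-((n : ℝ) * m) / 2) * Real.exp (-‖Y - M‖ ^ 2 / 2) *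
          svsDensity n m M) ∧
    (∫⁻ M, ENNReal.ofReal
        ((2 * Real.pi) ^ (-((n : ℝ) * m) / 2) * Real.exp (-‖Y - M‖ ^ 2 / 2) *
          svsDensity n m M)) < ⊤ := by
  have hc : 0 < (2 * Real.pi) ^ (-((n : ℝ) * m) / 2) := by positivity
  have hnm' : (m : ℝ) + 2 ≤ n := by exact_mod_cast hnm
  have hφ : ∀ c : EuclideanSpace ℝ (Fin n), Measurable fun v => gaussian (c - v) := fun c =>
    (continuous_gaussian_sub c).measurable
  obtain ⟨C, hC, hCV⟩ := exists_lintegral_gaussian_mul_distWeight_le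
    (E := EuclideanSpace ℝ (Fin n)) (d := m) (by linarith : (0 : ℝ) < n - m - 1)
    (by rw [finrank_euclideanSpace_fin]; linarith)
  rw [lintegral_marginal_eq n m Y hc.le]
  constructor
  · exact ENNReal.mul_pos (ENNReal.ofReal_pos.mpr hc).ne'
      (lintegral_prod_mul_gramDensity_pos volume _ hφ (fun _ _ => gaussian_ne_zero _)
        (by rw [finrank_euclideanSpace_fin]; omega) (cols Y)).ne'
  · exact ENNReal.mul_lt_top ofReal_lt_top
      ((lintegral_prod_mul_gramDensity_le volume _ hφ (fun V hV => hCV V hV.le) (cols Y)).trans_lt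
        (pow_lt_top hC.lt_top))

theorem stmt10 (n m : ℕ) (hm : 1 ≤ m) (hnm : m + 2 ≤ n)
    (Y : EuclideanSpace ℝ (Fin n × Fin m)) :
    0 < ∫⁻ M, ENNReal.ofReal
        ((2 * Real.pi) ^ (-((n : ℝ) * m) / 2) * Real.exp (-‖Y - M‖ ^ 2 / 2) *
          svsDensity n m M) ∧
    (∫⁻ M, ENNReal.ofReal
        ((2 * Real.pi) ^ (-((n : ℝ) * m) / 2) * Real.exp (-‖Y - M‖ ^ 2 / 2) *
          svsDensity n m M)) < ⊤ :=
  stmt10_general n m hnm Y
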